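/- Let S and T be bounded linear operators on complex Banach spaces X and Y respectively with σ(S) ∩ σ(T) = ∅. Then for every bounded operator X₀ : Y → X, the equation S X₀ = X₀ T implies X₀ = 0. -/

import Mathlib

/-!
Left composition with `S` and right composition with `T` are commuting operators `L` and `R` on
the Banach space `Y →L[ℂ] X`, with `σ(L) ⊆ σ(S)` and `σ(R) ⊆ σ(T)`. The double centralizer of
`{L, R}` is a closed commutative subalgebra in which spectra are the same as in the ambient
algebra, so Gelfand theory gives `σ(L - R) ⊆ σ(L) - σ(R)`, which does not contain `0`. Hence
`L - R : X₀ ↦ S X₀ - X₀ T` is invertible and has trivial kernel.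
-/

open ContinuousLinearMap MulOpposite Pointwise

theorem spectrum_op {R A : Type*} [CommSemiring R] [Ring A] [Algebra R A] (a : A) :
    spectrum R (op a) = spectrum R a := by
  ext r
  simp only [spectrum.mem_iff, MulOpposite.algebraMap_apply, ← op_sub, isUnit_op]

namespace ContinuousLinearMap

variable (𝕜 E F : Type*) [NontriviallyNormedField 𝕜] [NormedAddCommGroup E] [NormedSpace 𝕜 E]
  [NormedAddCommGroup F] [NormedSpace 𝕜 F]

noncomputable def postcompAlgHom : (F →L[𝕜] F) →ₐ[𝕜] ((E →L[𝕜] F) →L[𝕜] (E →L[𝕜] F)) :=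
  AlgHom.ofLinearMap (compL 𝕜 E F F) rfl fun _ _ ↦ rfl

noncomputable def precompAlgHom : (E →L[𝕜] E)ᵐᵒᵖ →ₐ[𝕜] ((E →L[𝕜] F) →L[𝕜] (E →L[𝕜] F)) :=
  AlgHom.ofLinearMap
    ((compL 𝕜 E E F).flip.toLinearMap.comp (opLinearEquiv 𝕜).symm.toLinearMap) rfl fun _ _ ↦ rfl

variable {𝕜 E F}

theorem commute_postcompAlgHom_precompAlgHom (S : F →L[𝕜] F) (T : (E →L[𝕜] E)ᵐᵒᵖ) :
    Commute (postcompAlgHom 𝕜 E F S) (precompAlgHom 𝕜 E F T) := rfl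

end ContinuousLinearMap

namespace Subalgebra

variable {R A : Type*} [CommRing R] [Ring A] [Algebra R A]

theorem isUnit_centralizer_iff {s : Set A} {x : centralizer R s} :
    IsUnit x ↔ IsUnit (x : A) := by
  refine ⟨fun hx ↦ hx.map (centralizer R s).val, fun hx ↦ ?_⟩
  have hinv : ↑hx.unit⁻¹ ∈ centralizer R s := fun g hg ↦
    (Commute.units_inv_right (u := hx.unit) (x.2 g hg)).eq
  exact ⟨⟨x, ⟨_, hinv⟩, Subtype.ext hx.mul_val_inv, Subtype.ext hx.val_inv_mul⟩, rfl⟩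

theorem spectrum_centralizer {s : Set A} (x : centralizer R s) :
    spectrum R x = spectrum R (x : A) := by
  ext r
  simp only [spectrum.mem_iff, not_iff_not]
  exact isUnit_centralizer_iff

end Subalgebra

section Gelfand

variable {A : Type*} [NormedRing A] [NormedAlgebra ℂ A] [CompleteSpace A]

theorem Commute.spectrum_sub_subset {a b : A} (hab : Commute a b) :
    spectrum ℂ (a - b) ⊆ spectrum ℂ a - spectrum ℂ b := by
  have hcomm : ∀ x ∈ ({a, b} : Set A), ∀ y ∈ ({a, b} : Set A), x * y = y * x := by
    rintro _ (rfl | rfl) _ (rfl | rfl) <;> first | rfl | exact hab.eq | exact hab.eq.symm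
  set B := Subalgebra.centralizer ℂ (Set.centralizer ({a, b} : Set A))
  let _ : NormedCommRing B :=
    { (inferInstance : NormedRing B) with
      mul_comm := fun x y ↦ Subtype.ext <|
        Set.centralizer_centralizer_comm_of_comm hcomm _ x.2 _ y.2 }
  have _ : CompleteSpace B := (Set.isClosed_centralizer _).completeSpace_coe
  let a' : B := ⟨a, Set.subset_centralizer_centralizer (Set.mem_insert a {b})⟩
  let b' : B := ⟨b, Set.subset_centralizer_centralizer (Set.mem_insert_of_mem a rfl)⟩
  intro z hz
  rw [show a - b = ((a' - b' : B) : A) from rfl, ← Subalgebra.spectrum_centralizer,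
    WeakDual.CharacterSpace.mem_spectrum_iff_exists] at hz
  obtain ⟨φ, rfl⟩ := hz
  refine ⟨φ a', ?_, φ b', ?_, (map_sub φ _ _).symm⟩
  · exact Subalgebra.spectrum_centralizer a' ▸ AlgHom.apply_mem_spectrum φ a'
  · exact Subalgebra.spectrum_centralizer b' ▸ AlgHom.apply_mem_spectrum φ b'

theorem Commute.isUnit_sub_of_disjoint_spectrum {a b : A} (hab : Commute a b)
    (h : Disjoint (spectrum ℂ a) (spectrum ℂ b)) : IsUnit (a - b) := by
  rw [← spectrum.zero_notMem_iff ℂ]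
  intro hz
  obtain ⟨x, hx, y, hy, hxy⟩ := hab.spectrum_sub_subset hz
  exact h.ne_of_mem hx hy (sub_eq_zero.mp hxy)

end Gelfand

/-- uniqueness part of Rosenblum's corollary: if `σ(S) ∩ σ(T) = ∅` then
`S X₀ = X₀ T` implies `X₀ = 0`. -/
theorem stmt4 {X Y : Type*} [NormedAddCommGroup X] [NormedSpace ℂ X] [CompleteSpace X]
    [NormedAddCommGroup Y] [NormedSpace ℂ Y] [CompleteSpace Y]
    (S : X →L[ℂ] X) (T : Y →L[ℂ] Y) (hdisj : spectrum ℂ S ∩ spectrum ℂ T = ∅)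
    (X₀ : Y →L[ℂ] X) (h : S.comp X₀ = X₀.comp T) : X₀ = 0 := by
  set L := postcompAlgHom ℂ Y X S
  set R := precompAlgHom ℂ Y X (op T)
  have hLR : Disjoint (spectrum ℂ L) (spectrum ℂ R) :=
    (Set.disjoint_iff_inter_eq_empty.mpr hdisj).mono (AlgHom.spectrum_apply_subset _ S)
      (spectrum_op (R := ℂ) T ▸ AlgHom.spectrum_apply_subset _ (op T))
  obtain ⟨u, hu⟩ : IsUnit (L - R) :=
    Commute.isUnit_sub_of_disjoint_spectrum (A := (Y →L[ℂ] X) →L[ℂ] (Y →L[ℂ] X))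
      (commute_postcompAlgHom_precompAlgHom S (op T)) hLR
  have hX₀ : (L - R) X₀ = 0 := sub_eq_zero.mpr h
  simpa [hu, hX₀] using (DFunLike.congr_fun u.inv_mul X₀).symm
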